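/- arXiv:1903.06222 — 4 statements merged into one kernel-verified Lean document; each statement's English description precedes it below -/
import Mathlib

section
/- Let G be a linearly ordered abelian group and n ≥ 1 an integer. Let H be the set of all g in G such that every open interval (a,b) with 0 ≤ a ≤ b ≤ |g| that contains at least n elements contains an element divisible by n (i.e. of the form n·x). Then H is a convex subgroup of G. -/
/-- The set of `g ∈ G` such that every open interval `(a,b)` with `0 ≤ a ≤ b ≤ |g|`
containing at least `n` elements contains an element divisible by `n`. -/
def RegSet (G : Type*) [AddCommGroup G] [LinearOrder G] [IsOrderedAddMonoid G] (n : ℕ) : Set G :=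
  {g : G | ∀ a b : G, 0 ≤ a → a ≤ b → b ≤ |g| →
    (∃ f : Fin n ↪ G, ∀ i, f i ∈ Set.Ioo a b) → ∃ x : G, n • x ∈ Set.Ioo a b}

/-! Membership of `g` depends only on `|g|` and is monotone in it, so closure under negation and
convexity are immediate; the content is closure under addition, and the argument splits according
to the order near `0`.

If `G` is densely ordered, an interval has `n` points iff it is nonempty, so `g ∈ H` says that `nG`
is dense in `[0, |g|]`; a point of `nG` in `(a, b) ⊆ [0, |g| + |h|]` is then found as a sum of one
in `(a - |h|, |g|)` and one in `[0, |h|]`.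

If `ε` is the least positive element, `(a, b)` has `n` points iff `a + nε < b`; testing the windows
`(x - (n + 1)ε, x)` shows that `g ∈ H` iff `[0, |g|] ⊆ nG + ℤε`, which is closed under addition
because `nG + ℤε` is a subgroup. -/

open Set

lemma exists_fin_embedding_Ioo {α : Type*} [Preorder α] [DenselyOrdered α] {a b : α} (h : a < b)
    (n : ℕ) : ∃ f : Fin n ↪ α, ∀ i, f i ∈ Ioo a b :=
  ⟨(Fin.valEmbedding.trans ((Ioo_infinite h).natEmbedding _)).trans (Function.Embedding.subtype _),
    fun _ => Subtype.prop _⟩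

section OrderedGroup

variable {G : Type*} [AddCommGroup G] [LinearOrder G] [IsOrderedAddMonoid G]

variable (G) in
lemma exists_isLeast_Ioi_zero_or_denselyOrdered :
    (∃ ε : G, IsLeast (Ioi 0) ε) ∨ DenselyOrdered G := by
  by_cases h : ∃ ε : G, IsLeast (Ioi 0) ε
  · exact Or.inl h
  · refine Or.inr ⟨fun a b hab => ?_⟩
    obtain ⟨t, ht0, htb⟩ : ∃ t : G, 0 < t ∧ t < b - a := by
      by_contra! hne
      exact h ⟨b - a, sub_pos.mpr hab, fun t ht => hne t ht⟩
    exact ⟨a + t, lt_add_of_pos_right a ht0, lt_sub_iff_add_lt'.mp htb⟩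

lemma exists_fin_embedding_Ioo_of_add_nsmul_lt {ε a b : G} (hε : 0 < ε) {n : ℕ}
    (h : a + n • ε < b) : ∃ f : Fin n ↪ G, ∀ i, f i ∈ Ioo a b := by
  refine ⟨⟨fun i => a + ((i : ℕ) + 1) • ε, fun i j hij => ?_⟩, fun i => ⟨?_, ?_⟩⟩
  · simpa [Fin.ext_iff] using (nsmul_left_strictMono hε).injective (add_left_cancel hij)
  · exact lt_add_of_pos_right a (nsmul_pos hε (Nat.succ_ne_zero _))
  · exact lt_of_le_of_lt (add_le_add_right (nsmul_le_nsmul_left hε.le i.isLt) a) h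

lemma add_le_of_lt_of_isLeast_Ioi {ε x y : G} (hε : IsLeast (Ioi 0) ε) (h : x < y) : x + ε ≤ y :=
  le_sub_iff_add_le'.mp (hε.2 (sub_pos.mpr h))

lemma mem_zmultiples_of_le_nsmul {ε t : G} (hε : IsLeast (Ioi 0) ε) (ht : 0 ≤ t) {m : ℕ}
    (htm : t ≤ m • ε) : t ∈ AddSubgroup.zmultiples ε := by
  induction m with
  | zero => simp [le_antisymm (zero_nsmul ε ▸ htm) ht]
  | succ m ih =>
    rcases le_or_gt t (m • ε) with h | h
    · exact ih h
    · rw [le_antisymm htm (succ_nsmul ε m ▸ add_le_of_lt_of_isLeast_Ioi hε h)]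
      exact (AddSubgroup.zmultiples ε).nsmul_mem (AddSubgroup.mem_zmultiples ε) _

lemma add_card_nsmul_lt {ε a b : G} (hε : IsLeast (Ioi 0) ε) (hab : a < b) (s : Finset G)
    (hs : ↑s ⊆ Ioo a b) : a + s.card • ε < b := by
  induction s using Finset.induction_on_min generalizing a with
  | empty => simpa using hab
  | insert x s hxs ih =>
    have hx := hs (Finset.mem_insert_self x s)
    have hxb : x + s.card • ε < b :=
      ih hx.2 fun y hy => ⟨hxs y hy, (hs (Finset.mem_insert_of_mem hy)).2⟩
    rw [Finset.card_insert_of_notMem fun h => lt_irrefl x (hxs x h), succ_nsmul', ← add_assoc]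
    exact lt_of_le_of_lt (add_le_add_left (add_le_of_lt_of_isLeast_Ioi hε hx.1) _) hxb

lemma Icc_zero_abs_add_subset {K : AddSubgroup G} {g h : G} (hg : Icc 0 |g| ⊆ K)
    (hh : Icc 0 |h| ⊆ K) : Icc 0 |g + h| ⊆ K := by
  rintro x ⟨hx0, hx⟩
  rcases le_total x |g| with hxg | hxg
  · exact hg ⟨hx0, hxg⟩
  · rw [← add_sub_cancel |g| x]
    exact K.add_mem (hg ⟨abs_nonneg g, le_rfl⟩)
      (hh ⟨sub_nonneg.mpr hxg, sub_le_iff_le_add'.mpr (hx.trans (abs_add_le g h))⟩)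

lemma exists_nsmul_mem_Ioo_of_mem_sup {n : ℕ} (hn : 1 ≤ n) {ε a b : G} (hε : 0 < ε)
    (ha : a ∈ (nsmulAddMonoidHom n).range ⊔ AddSubgroup.zmultiples ε) (hab : a + n • ε < b) :
    ∃ x : G, n • x ∈ Ioo a b := by
  obtain ⟨_, ⟨y, rfl⟩, _, ⟨k, rfl⟩, rfl⟩ := AddSubgroup.mem_sup.mp ha
  simp only [nsmulAddMonoidHom_apply] at hab ⊢
  -- `j := (-k - 1) % n + 1` lies in `[1, n]` and `n ∣ k + j`
  set r := (-k - 1) % (n : ℤ)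
  have hr0 : 0 ≤ r := Int.emod_nonneg _ (by omega)
  have hrn : r < n := Int.emod_lt_of_pos _ (by omega)
  have hdiv := Int.emod_add_mul_ediv (-k - 1) n
  refine ⟨y - ((-k - 1) / n) • ε, ?_⟩
  have key : n • (y - ((-k - 1) / n) • ε) = n • y + k • ε + (r + 1) • ε := by
    linear_combination (norm := module) -(hdiv • ε)
  rw [key]
  refine ⟨lt_add_of_pos_right _ (zsmul_pos hε (by omega)), lt_of_le_of_lt ?_ hab⟩
  rw [← natCast_zsmul ε n]
  exact add_le_add_right (zsmul_le_zsmul_left hε.le (by omega)) _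

end OrderedGroup

namespace RegSet

variable {G : Type*} [AddCommGroup G] [LinearOrder G] [IsOrderedAddMonoid G] {n : ℕ}

lemma mem_of_abs_le {g h : G} (hg : g ∈ RegSet G n) (hhg : |h| ≤ |g|) : h ∈ RegSet G n :=
  fun a b ha hab hb hpts => hg a b ha hab (hb.trans hhg) hpts

lemma zero_mem (hn : 1 ≤ n) : (0 : G) ∈ RegSet G n := by
  rintro a b ha - hb ⟨f, hf⟩
  have := hf ⟨0, hn⟩
  rw [abs_zero] at hb
  exact absurd (this.1.trans this.2) (not_lt.mpr (hb.trans ha))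

lemma neg_mem {g : G} (hg : g ∈ RegSet G n) : -g ∈ RegSet G n :=
  mem_of_abs_le hg (abs_neg g).le

lemma mem_iff_of_denselyOrdered [DenselyOrdered G] (hn : 1 ≤ n) {g : G} :
    g ∈ RegSet G n ↔ ∀ a b, 0 ≤ a → a < b → a < |g| → ∃ x : G, n • x ∈ Ioo a b := by
  constructor
  · intro hg a b ha hab hag
    obtain ⟨x, hx⟩ := hg a (min b |g|) ha (le_min hab.le hag.le) (min_le_right _ _)
      (exists_fin_embedding_Ioo (lt_min hab hag) n)
    exact ⟨x, hx.1, hx.2.trans_le (min_le_left _ _)⟩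
  · rintro hg a b ha - hb ⟨f, hf⟩
    have hab := (hf ⟨0, hn⟩).1.trans (hf ⟨0, hn⟩).2
    exact hg a b ha hab (hab.trans_le hb)

lemma add_mem_of_denselyOrdered [DenselyOrdered G] (hn : 1 ≤ n) {g h : G}
    (hg : g ∈ RegSet G n) (hh : h ∈ RegSet G n) : g + h ∈ RegSet G n := by
  rw [mem_iff_of_denselyOrdered hn] at hg hh ⊢
  intro a b ha hab hagh
  rcases lt_or_ge a |g| with hag | hag
  · exact hg a b ha hab hag
  rcases lt_or_ge a |h| with hah | hah
  · exact hh a b ha hab hah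
  have hlt : a - |h| < |g| := sub_lt_iff_lt_add.mpr (hagh.trans_le (abs_add_le g h))
  obtain ⟨x, hx⟩ := hg (a - |h|) |g| (sub_nonneg.mpr hah) hlt hlt
  obtain ⟨y, hy⟩ := hh (a - n • x) (b - n • x) (sub_nonneg.mpr (hx.2.le.trans hag))
    (sub_lt_sub_right hab _) (sub_lt_comm.mp hx.1)
  refine ⟨x + y, ?_, ?_⟩ <;> rw [nsmul_add]
  · exact sub_lt_iff_lt_add'.mp hy.1
  · exact lt_sub_iff_add_lt'.mp hy.2

lemma mem_iff_Icc_subset (hn : 1 ≤ n) {ε : G} (hε : IsLeast (Ioi 0) ε) {g : G} :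
    g ∈ RegSet G n ↔ Icc 0 |g| ⊆ ↑((nsmulAddMonoidHom n).range ⊔ AddSubgroup.zmultiples ε) := by
  constructor
  · rintro hg x ⟨hx0, hxg⟩
    rcases le_or_gt x ((n + 1) • ε) with hx | hx
    · exact AddSubgroup.mem_sup_right (mem_zmultiples_of_le_nsmul hε hx0 hx)
    have hpts : x - (n + 1) • ε + n • ε < x := by
      rw [show x - (n + 1) • ε + n • ε = x - ε by rw [succ_nsmul]; abel]
      exact sub_lt_self x hε.1
    obtain ⟨y, hy⟩ := hg (x - (n + 1) • ε) x (sub_nonneg.mpr hx.le)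
      (sub_le_self _ (nsmul_nonneg hε.1.le _)) hxg
      (exists_fin_embedding_Ioo_of_add_nsmul_lt hε.1 hpts)
    have hxy : x - n • y ∈ AddSubgroup.zmultiples ε :=
      mem_zmultiples_of_le_nsmul hε (sub_nonneg.mpr hy.2.le) (sub_le_comm.mp hy.1.le)
    rw [← add_sub_cancel (n • y) x]
    exact add_mem (AddSubgroup.mem_sup_left ⟨y, rfl⟩) (AddSubgroup.mem_sup_right hxy)
  · rintro hK a b ha hab hb ⟨f, hf⟩
    have hlt : a < b := (hf ⟨0, hn⟩).1.trans (hf ⟨0, hn⟩).2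
    refine exists_nsmul_mem_Ioo_of_mem_sup hn hε.1 (hK ⟨ha, hab.trans hb⟩) ?_
    simpa using add_card_nsmul_lt hε hlt (Finset.univ.map f) (by simpa [Set.subset_def] using hf)

lemma add_mem (hn : 1 ≤ n) {g h : G} (hg : g ∈ RegSet G n) (hh : h ∈ RegSet G n) :
    g + h ∈ RegSet G n := by
  rcases exists_isLeast_Ioi_zero_or_denselyOrdered G with ⟨ε, hε⟩ | _
  · rw [mem_iff_Icc_subset hn hε] at hg hh ⊢
    exact Icc_zero_abs_add_subset hg hh
  · exact add_mem_of_denselyOrdered hn hg hh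

end RegSet

/-- `RegSet G n` is a convex subgroup of `G`. -/
theorem stmt_3 (G : Type*) [AddCommGroup G] [LinearOrder G] [IsOrderedAddMonoid G] (n : ℕ) (hn : 1 ≤ n) :
    ∃ H : AddSubgroup G,
      (H : Set G) = RegSet G n ∧
      ∀ x ∈ H, ∀ x' ∈ H, ∀ y : G, x < y → y < x' → y ∈ H := by
  refine ⟨{ carrier := RegSet G n,
            add_mem' := RegSet.add_mem hn,
            zero_mem' := RegSet.zero_mem hn,
            neg_mem' := RegSet.neg_mem }, rfl, ?_⟩
  intro x hx x' hx' y hxy hyx'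
  have hy := abs_le_max_abs_abs hxy.le hyx'.le
  rcases le_total |x| |x'| with h | h
  · exact RegSet.mem_of_abs_le hx' (hy.trans (max_le h le_rfl))
  · exact RegSet.mem_of_abs_le hx (hy.trans (max_le le_rfl h))
end

section
/- Let Z be a discrete ordered abelian group with least positive element 1_Z, let O = {k·1_Z : k ∈ ℤ}, and suppose Z is not n-regular for some integer n ≥ 1. Let H be the set of all g in Z such that every open interval (a,b) with 0 ≤ a ≤ b ≤ |g| containing at least n elements contains an element divisible by n. Then H is a convex subgroup of Z with O ⊆ H and H ≠ Z; in particular H is a nontrivial convex subgroup of Z. -/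
/-- `G` is `n`-regular: every open interval containing at least `n` elements contains
an element divisible by `n`. -/
def NRegular (G : Type*) [AddCommGroup G] [LinearOrder G] [IsOrderedAddMonoid G] (n : ℕ) : Prop :=
  ∀ a b : G, (∃ f : Fin n ↪ G, ∀ i, f i ∈ Set.Ioo a b) → ∃ x : G, n • x ∈ Set.Ioo a b

/-!
Because `Z` is discrete, an open interval `(a, b)` has at least `n` elements iff
`a + n • 1 < b`, and the window `(u, u + (n + 1) • 1)` contains a multiple of `n` iff
`u ∈ n Z + O`. Hence `g ∈ RegSet Z n` iff every `u` with `|u| ≤ |g|` lies in `n Z + O`: the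
regular set is the largest convex subgroup contained in `n Z + O`. It contains the convex
subgroup `O`, and it is not all of `Z`, for otherwise `n Z + O = Z` and `Z` would be `n`-regular.
-/

open AddSubgroup

namespace AddSubgroup

variable {G : Type*} [AddCommGroup G] [LinearOrder G] [IsOrderedAddMonoid G]

def convexCore (S : AddSubgroup G) : AddSubgroup G where
  carrier := {g | ∀ u, |u| ≤ |g| → u ∈ S}
  zero_mem' u hu := by
    rw [abs_zero, abs_nonpos_iff] at hu
    exact hu ▸ S.zero_mem
  add_mem' {a b} ha hb u hu := by
    -- Riesz decomposition: `|u| = min |u| |a| + (|u| - min |u| |a|)`, the second part in `[0, |b|]`.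
    rw [← abs_mem_iff, ← add_sub_cancel (min |u| |a|) |u|]
    refine S.add_mem (ha _ ?_) (hb _ ?_)
    · rw [abs_of_nonneg (le_min (abs_nonneg u) (abs_nonneg a))]
      exact min_le_right _ _
    · rw [abs_of_nonneg (sub_nonneg.2 (min_le_left _ _))]
      rcases le_total |u| |a| with h | h
      · simp [h]
      · rw [min_eq_right h, sub_le_iff_le_add']
        exact hu.trans (abs_add_le a b)
  neg_mem' {a} ha u hu := ha u (by rwa [abs_neg] at hu)

variable {S : AddSubgroup G}

theorem convexCore_le : S.convexCore ≤ S := fun g hg => hg g le_rfl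

theorem mem_convexCore_of_le_of_le {x x' y : G} (hx : x ∈ S.convexCore)
    (hx' : x' ∈ S.convexCore) (hxy : x ≤ y) (hyx' : y ≤ x') : y ∈ S.convexCore := fun u hu => by
  rcases le_max_iff.1 (hu.trans (abs_le_max_abs_abs hxy hyx')) with hux | hux
  exacts [hx u hux, hx' u hux]

theorem le_convexCore {T : AddSubgroup G} (hT : ∀ t ∈ T, ∀ u, |u| ≤ |t| → u ∈ T) (hTS : T ≤ S) :
    T ≤ S.convexCore := fun t ht u hu => hTS (hT t ht u hu)

end AddSubgroup

/-- The subgroup `n Z + O`. -/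
def nsmulRangeSupZMultiples {Z : Type*} [AddCommGroup Z] (one : Z) (n : ℕ) : AddSubgroup Z :=
  (nsmulAddMonoidHom n).range ⊔ zmultiples one

theorem mem_nsmulRangeSupZMultiples_iff {Z : Type*} [AddCommGroup Z] {one : Z} {n : ℕ} {u : Z} :
    u ∈ nsmulRangeSupZMultiples one n ↔ ∃ x : Z, ∃ k : ℤ, n • x + k • one = u := by
  simp [nsmulRangeSupZMultiples, mem_sup, mem_zmultiples_iff]

section Discrete

variable {Z : Type*} [AddCommGroup Z] [LinearOrder Z] [IsOrderedAddMonoid Z] {one : Z}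

theorem exists_nsmul_eq_of_nonneg_of_lt (h1 : IsLeast {x : Z | 0 < x} one) {m : ℕ} {z : Z}
    (hz : 0 ≤ z) (hzm : z < m • one) : ∃ k < m, z = k • one := by
  induction m generalizing z with
  | zero => exact absurd (hz.trans_lt hzm) (by simp)
  | succ m ih =>
    rcases hz.eq_or_lt with rfl | hz
    · exact ⟨0, m.succ_pos, (zero_nsmul one).symm⟩
    · rw [succ_nsmul, ← sub_lt_iff_lt_add] at hzm
      obtain ⟨k, hk, hzk⟩ := ih (sub_nonneg.2 (h1.2 hz)) hzm
      exact ⟨k + 1, by omega, by rw [succ_nsmul, ← hzk, sub_add_cancel]⟩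

theorem mem_zmultiples_of_abs_le (h1 : IsLeast {x : Z | 0 < x} one) {g u : Z}
    (hg : g ∈ zmultiples one) (hu : |u| ≤ |g|) : u ∈ zmultiples one := by
  obtain ⟨k, rfl⟩ := hg
  have hlt : |u| < (k.natAbs + 1) • one :=
    calc |u| ≤ |k • one| := hu
      _ = k.natAbs • one := by rw [abs_zsmul, abs_of_pos h1.1, Int.abs_eq_natAbs, natCast_zsmul]
      _ < (k.natAbs + 1) • one := nsmul_lt_nsmul_left h1.1 k.natAbs.lt_succ_self
  obtain ⟨j, -, hj⟩ := exists_nsmul_eq_of_nonneg_of_lt h1 (abs_nonneg u) hlt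
  rw [← abs_mem_iff, hj]
  exact nsmul_mem (mem_zmultiples one) j

theorem exists_embedding_Ioo_iff (h1 : IsLeast {x : Z | 0 < x} one) {n : ℕ} (hn : 1 ≤ n)
    {a b : Z} : (∃ f : Fin n ↪ Z, ∀ i, f i ∈ Set.Ioo a b) ↔ a + n • one < b := by
  obtain ⟨m, rfl⟩ := Nat.exists_eq_add_of_le' hn
  constructor
  · rintro ⟨f, hf⟩
    by_contra! hba
    have key (i : Fin (m + 1)) : ∃ k < m, f i - a - one = k • one := by
      refine exists_nsmul_eq_of_nonneg_of_lt h1 (sub_nonneg.2 (h1.2 (sub_pos.2 (hf i).1))) ?_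
      rw [sub_lt_iff_lt_add, sub_lt_iff_lt_add, ← succ_nsmul]
      exact (hf i).2.trans_le (hba.trans_eq (add_comm _ _))
    choose k hkm hk using key
    have hinj : Function.Injective fun i => (⟨k i, hkm i⟩ : Fin m) := by
      intro i j hij
      have hkij : k i = k j := Fin.mk.inj_iff.1 hij
      exact f.injective (sub_left_inj.1 (sub_left_inj.1 (by rw [hk i, hk j, hkij])))
    simpa using Fintype.card_le_of_injective _ hinj
  · intro hab
    refine ⟨⟨fun i => a + ((i : ℕ) + 1) • one, fun i j hij => ?_⟩, fun i => ⟨?_, ?_⟩⟩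
    · simpa [Fin.ext_iff] using (nsmul_left_strictMono h1.1).injective (add_left_cancel hij)
    · exact lt_add_of_pos_right a (nsmul_pos h1.1 i.val.succ_ne_zero)
    · exact lt_of_le_of_lt (add_le_add_right (nsmul_le_nsmul_left h1.1.le i.isLt) a) hab

theorem mem_nsmulRangeSupZMultiples_of_exists_nsmul_mem_Ioo (h1 : IsLeast {x : Z | 0 < x} one)
    {n : ℕ} {u : Z} (h : ∃ x, n • x ∈ Set.Ioo u (u + (n + 1) • one)) :
    u ∈ nsmulRangeSupZMultiples one n := by
  obtain ⟨x, hux, hxu⟩ := h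
  obtain ⟨k, -, hk⟩ :=
    exists_nsmul_eq_of_nonneg_of_lt h1 (sub_nonneg.2 hux.le) (sub_lt_iff_lt_add'.2 hxu)
  refine mem_nsmulRangeSupZMultiples_iff.2 ⟨x, -(k : ℤ), ?_⟩
  rw [neg_smul, natCast_zsmul, ← hk]
  abel

theorem exists_nsmul_mem_Ioo_of_mem_nsmulRangeSupZMultiples (h1 : IsLeast {x : Z | 0 < x} one)
    {n : ℕ} (hn : 1 ≤ n) {u b : Z} (hu : u ∈ nsmulRangeSupZMultiples one n)
    (hb : u + n • one < b) : ∃ x, n • x ∈ Set.Ioo u b := by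
  obtain ⟨y, k, rfl⟩ := mem_nsmulRangeSupZMultiples_iff.1 hu
  -- `n * (k / n + 1)` is the least multiple of `n` above `k`.
  have hn' : (0 : ℤ) < n := by exact_mod_cast hn
  have hlo : k < n * (k / n + 1) := by
    linarith [Int.mul_ediv_add_emod k n, Int.emod_lt_of_pos k hn']
  have hhi : n * (k / n + 1) ≤ k + n := by
    linarith [Int.mul_ediv_add_emod k n, Int.emod_nonneg k hn'.ne']
  have hsmul : n • (y + (k / n + 1) • one) = n • y + ((n : ℤ) * (k / n + 1)) • one := by
    rw [smul_add, ← natCast_zsmul (_ • one) n, smul_smul]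
  refine ⟨y + (k / n + 1) • one, ?_, ?_⟩
  · rw [hsmul]
    exact add_lt_add_right (zsmul_lt_zsmul_left h1.1 hlo) _
  · calc n • (y + (k / n + 1) • one)
        ≤ n • y + (k + n) • one := hsmul ▸ add_le_add_right (zsmul_le_zsmul_left h1.1.le hhi) _
      _ = n • y + k • one + n • one := by rw [add_zsmul, natCast_zsmul, add_assoc]
      _ < b := hb

theorem convexCore_nsmulRangeSupZMultiples_eq_regSet (h1 : IsLeast {x : Z | 0 < x} one)
    {n : ℕ} (hn : 1 ≤ n) : ((nsmulRangeSupZMultiples one n).convexCore : Set Z) = RegSet Z n := by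
  ext g
  constructor
  · intro hg a b ha hab hb hpts
    exact exists_nsmul_mem_Ioo_of_mem_nsmulRangeSupZMultiples h1 hn
      (hg a (by rw [abs_of_nonneg ha]; exact hab.trans hb)) ((exists_embedding_Ioo_iff h1 hn).1 hpts)
  · intro hg u hu
    rw [← abs_mem_iff]
    rcases lt_or_ge |u| ((n + 1) • one) with hlt | hge
    · obtain ⟨k, -, hk⟩ := exists_nsmul_eq_of_nonneg_of_lt h1 (abs_nonneg u) hlt
      exact hk ▸ mem_sup_right (nsmul_mem (mem_zmultiples one) k)
    · set v := |u| - (n + 1) • one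
      have hgap : v + n • one < |u| :=
        calc v + n • one = |u| - one := by simp only [v, succ_nsmul]; abel
          _ < |u| := sub_lt_self _ h1.1
      have hv : v ∈ nsmulRangeSupZMultiples one n := by
        refine mem_nsmulRangeSupZMultiples_of_exists_nsmul_mem_Ioo h1 ?_
        rw [sub_add_cancel]
        exact hg v |u| (sub_nonneg.2 hge) (sub_le_self _ (nsmul_nonneg h1.1.le _)) hu
          ((exists_embedding_Ioo_iff h1 hn).2 hgap)
      simpa [v] using add_mem hv (mem_sup_right (nsmul_mem (mem_zmultiples one) (n + 1)))

theorem nRegular_of_nsmulRangeSupZMultiples_eq_top (h1 : IsLeast {x : Z | 0 < x} one) {n : ℕ}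
    (hn : 1 ≤ n) (h : nsmulRangeSupZMultiples one n = ⊤) : NRegular Z n := fun a _ hpts =>
  exists_nsmul_mem_Ioo_of_mem_nsmulRangeSupZMultiples h1 hn (h ▸ mem_top a)
    ((exists_embedding_Ioo_iff h1 hn).1 hpts)

end Discrete

/-- If a discrete ordered abelian group `Z` is not `n`-regular, then `RegSet Z n` is a
nontrivial convex subgroup containing `O = {k • 1_Z : k ∈ ℤ}`. -/
theorem stmt_4 (Z : Type*) [AddCommGroup Z] [LinearOrder Z] [IsOrderedAddMonoid Z] (one : Z)
    (h1 : IsLeast {x : Z | 0 < x} one) (n : ℕ) (hn : 1 ≤ n) (hreg : ¬ NRegular Z n) :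
    ∃ H : AddSubgroup Z,
      (H : Set Z) = RegSet Z n ∧
      (∀ x ∈ H, ∀ x' ∈ H, ∀ y : Z, x < y → y < x' → y ∈ H) ∧
      (Set.range fun k : ℤ => k • one) ⊆ (H : Set Z) ∧
      H ≠ ⊤ ∧ H ≠ ⊥ := by
  set S := nsmulRangeSupZMultiples one n
  have hO : zmultiples one ≤ S.convexCore :=
    le_convexCore (fun _ ht _ hu => mem_zmultiples_of_abs_le h1 ht hu) le_sup_right
  refine ⟨S.convexCore, convexCore_nsmulRangeSupZMultiples_eq_regSet h1 hn,
    fun x hx x' hx' y hxy hyx' => mem_convexCore_of_le_of_le hx hx' hxy.le hyx'.le, ?_, ?_, ?_⟩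
  · rintro _ ⟨k, rfl⟩
    exact hO (zsmul_mem (mem_zmultiples one) k)
  · intro htop
    exact hreg (nRegular_of_nsmulRangeSupZMultiples_eq_top h1 hn (eq_top_iff.2 (htop ▸ convexCore_le)))
  · intro hbot
    have hone : one ∈ S.convexCore := hO (mem_zmultiples one)
    rw [hbot, mem_bot] at hone
    exact h1.1.ne' hone
end

section
/- Every eventually periodic subset of ℤ is definable with parameters in the structure (ℤ,<,+), viewed as a structure in the language of ordered abelian groups. -/
open FirstOrder

/-- Function symbols of the language of ordered abelian groups:
a constant `0`, a unary `-`, and a binary `+`. -/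
inductive OagFunc : ℕ → Type
  | zero : OagFunc 0
  | neg : OagFunc 1
  | add : OagFunc 2

/-- Relation symbols of the language of ordered abelian groups: a binary `<`. -/
inductive OagRel : ℕ → Type
  | lt : OagRel 2

/-- The language of ordered abelian groups. -/
def Log : FirstOrder.Language := ⟨OagFunc, OagRel⟩

/-- Every linearly ordered abelian group is an `Log`-structure in the natural way. -/
instance (G : Type*) [AddCommGroup G] [LinearOrder G] [IsOrderedAddMonoid G] : Log.Structure G where
  funMap {_} f x :=
    match f with
    | OagFunc.zero => 0
    | OagFunc.neg => -(x 0)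
    | OagFunc.add => x 0 + x 1
  RelMap {_} r x :=
    match r with
    | OagRel.lt => x 0 < x 1

/-- `A ⊆ ℤ` is eventually periodic. -/
def EvPeriodic (A : Set ℤ) : Prop :=
  ∃ n : ℤ, 0 < n ∧ ∃ m m' : ℤ,
    (∀ k : ℤ, m ≤ k → (k ∈ A ↔ k + n ∈ A)) ∧
    (∀ k : ℤ, k ≤ m' → (k ∈ A ↔ k - n ∈ A))

/-!
Split `A` at the thresholds `m`, `m'` of its eventual periodicity. Above `m`, membership depends
only on the residue mod the period `n`, so `A ∩ [m, ∞)` is `[m, ∞)` intersected with finitely many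
residue classes; below `m'` likewise, and the middle part is finite. Half-lines are defined by `<`
and a parameter, residue classes `x ≡ r [ZMOD n]` by `∃ y, x = r + (y + ⋯ + y)`, singletons by
equality, and definable sets are closed under finite Boolean combinations.
-/

open Language Set

namespace Set

variable {M : Type*} {L : Language} [L.Structure M] {A : Set M} {s t : Set M}

theorem Definable₁.union (hs : A.Definable₁ L s) (ht : A.Definable₁ L t) :
    A.Definable₁ L (s ∪ t) :=
  Definable.union hs ht

theorem Definable₁.inter (hs : A.Definable₁ L s) (ht : A.Definable₁ L t) :
    A.Definable₁ L (s ∩ t) :=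
  Definable.inter hs ht

theorem Definable₁.compl (hs : A.Definable₁ L s) : A.Definable₁ L sᶜ :=
  Definable.compl hs

theorem Finite.definable₁_biUnion {ι : Type*} {I : Set ι} (hI : I.Finite) {f : ι → Set M}
    (hf : ∀ i ∈ I, A.Definable₁ L (f i)) : A.Definable₁ L (⋃ i ∈ I, f i) := by
  have := hI.to_subtype
  refine (congrArg (A.Definable L) ?_).mpr (definable_iUnion_of_finite fun i : I => hf i i.2)
  ext
  simp

theorem Finite.definable₁ (hs : s.Finite) (hsA : s ⊆ A) : A.Definable₁ L s := by
  simpa using hs.definable₁_biUnion (f := fun a => {a}) fun a ha =>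
    Definable.singleton_of_mem L (hsA ha)

end Set

section Periodicity

variable {A : Set ℤ} {n : ℕ}

theorem mem_iff_add_mul_mem {m : ℤ} (h : ∀ k, m ≤ k → (k ∈ A ↔ k + n ∈ A)) (j : ℕ) {k : ℤ}
    (hk : m ≤ k) : k ∈ A ↔ k + n * j ∈ A := by
  induction j with
  | zero => simp
  | succ j ih =>
    have hnj : (0 : ℤ) ≤ n * j := by positivity
    rw [ih, h _ (by linarith)]
    push_cast
    ring_nf

theorem mem_iff_mem_of_modEq_of_mem_Ici {m : ℤ} (h : ∀ k, m ≤ k → (k ∈ A ↔ k + n ∈ A))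
    {x y : ℤ} (hx : x ∈ Ici m) (hy : y ∈ Ici m) (hxy : x ≡ y [ZMOD n]) : x ∈ A ↔ y ∈ A := by
  wlog hle : x ≤ y generalizing x y
  · exact (this hy hx hxy.symm (by omega)).symm
  obtain ⟨j, hj⟩ : n ∣ (y - x).toNat := by
    have := Int.modEq_iff_dvd.1 hxy
    rw [← Int.toNat_of_nonneg (sub_nonneg.2 hle)] at this
    exact_mod_cast this
  have hy' : y = x + n * j := by
    have := congrArg (fun k : ℕ => (k : ℤ)) hj
    push_cast [Int.toNat_of_nonneg (sub_nonneg.2 hle)] at this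
    linarith
  rw [hy']
  exact mem_iff_add_mul_mem h j hx

theorem mem_iff_mem_of_modEq_of_mem_Iic {m : ℤ} (h : ∀ k, k ≤ m → (k ∈ A ↔ k - n ∈ A))
    {x y : ℤ} (hx : x ∈ Iic m) (hy : y ∈ Iic m) (hxy : x ≡ y [ZMOD n]) : x ∈ A ↔ y ∈ A := by
  -- reflecting through `0` turns the downward case into the upward case for `-A`
  have hneg : ∀ k, -m ≤ k → (k ∈ Neg.neg ⁻¹' A ↔ k + n ∈ Neg.neg ⁻¹' A) := fun k hk => by
    simp only [mem_preimage, neg_add']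
    exact h (-k) (by linarith)
  simpa using mem_iff_mem_of_modEq_of_mem_Ici hneg (mem_Ici.2 (neg_le_neg hx))
    (mem_Ici.2 (neg_le_neg hy)) hxy.neg

end Periodicity

namespace Log

variable {α : Type*}

abbrev ZTerm (α : Type*) := (Log[[(univ : Set ℤ)]]).Term α

def paramTerm (a : ℤ) : ZTerm α := (Log.con (⟨a, trivial⟩ : (univ : Set ℤ))).term

def addTerm (t s : ZTerm α) : ZTerm α := Functions.apply₂ (Sum.inl OagFunc.add) t s

def nsmulTerm : ℕ → ZTerm α → ZTerm α
  | 0, _ => Constants.term (Sum.inl OagFunc.zero)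
  | k + 1, t => addTerm (nsmulTerm k t) t

@[simp] lemma realize_paramTerm (a : ℤ) (v : α → ℤ) : (paramTerm a : ZTerm α).realize v = a :=
  Term.realize_con

@[simp] lemma realize_addTerm (t s : ZTerm α) (v : α → ℤ) :
    (addTerm t s).realize v = t.realize v + s.realize v := rfl

@[simp] lemma realize_nsmulTerm (k : ℕ) (t : ZTerm α) (v : α → ℤ) :
    (nsmulTerm k t).realize v = k • t.realize v := by
  induction k with
  | zero => rw [zero_nsmul]; rfl
  | succ k ih => rw [nsmulTerm, realize_addTerm, ih, succ_nsmul]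

theorem definable₁_Iio (a : ℤ) : (univ : Set ℤ).Definable₁ Log (Iio a) :=
  ⟨Relations.formula₂ (Sum.inl OagRel.lt) (Term.var 0) (paramTerm a), by ext; rfl⟩

theorem definable₁_Ioi (a : ℤ) : (univ : Set ℤ).Definable₁ Log (Ioi a) :=
  ⟨Relations.formula₂ (Sum.inl OagRel.lt) (paramTerm a) (Term.var 0), by ext; rfl⟩

theorem definable₁_Ici (a : ℤ) : (univ : Set ℤ).Definable₁ Log (Ici a) :=
  compl_Iio (a := a) ▸ (definable₁_Iio a).compl

theorem definable₁_Iic (a : ℤ) : (univ : Set ℤ).Definable₁ Log (Iic a) :=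
  compl_Ioi (a := a) ▸ (definable₁_Ioi a).compl

theorem definable₁_setOf_modEq (n : ℕ) (a : ℤ) :
    (univ : Set ℤ).Definable₁ Log {x | x ≡ a [ZMOD n]} := by
  refine ⟨((Term.var (Sum.inl 0)).bdEqual
    (addTerm (paramTerm a) (nsmulTerm n (Term.var (Sum.inr 0))))).ex, ?_⟩
  ext v
  simp [Int.modEq_comm, Int.modEq_iff_add_fac, Formula.Realize, Fin.snoc]

theorem definable₁_inter_of_modEq {A S : Set ℤ} (hS : (univ : Set ℤ).Definable₁ Log S) {n : ℕ}
    (hn : n ≠ 0) (hA : ∀ x ∈ S, ∀ y ∈ S, x ≡ y [ZMOD n] → (x ∈ A ↔ y ∈ A)) :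
    (univ : Set ℤ).Definable₁ Log (A ∩ S) := by
  set R := (· % (n : ℤ)) '' (A ∩ S)
  have hR : R.Finite := (finite_Ico 0 (n : ℤ)).subset <| by
    rintro _ ⟨y, -, rfl⟩
    exact ⟨Int.emod_nonneg _ (by omega), Int.emod_lt_of_pos _ (by omega)⟩
  have hAS : A ∩ S = S ∩ ⋃ r ∈ R, {x | x ≡ r [ZMOD n]} := by
    ext x
    simp only [R, mem_inter_iff, mem_iUnion, mem_image, mem_ofPred_eq, exists_prop]
    constructor
    · rintro ⟨hxA, hxS⟩
      exact ⟨hxS, _, ⟨x, ⟨hxA, hxS⟩, rfl⟩, (Int.mod_modEq x n).symm⟩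
    · rintro ⟨hxS, _, ⟨y, ⟨hyA, hyS⟩, rfl⟩, hxy⟩
      exact ⟨(hA x hxS y hyS (hxy.trans (Int.mod_modEq y n))).2 hyA, hxS⟩
  rw [hAS]
  exact hS.inter (hR.definable₁_biUnion fun r _ => definable₁_setOf_modEq n r)

end Log

open Log

/-- Every eventually periodic subset of `ℤ` is definable with parameters in `(ℤ,<,+)`. -/
theorem stmt_13 (A : Set ℤ) (h : EvPeriodic A) :
    Set.Definable₁ (Set.univ : Set ℤ) Log A := by
  obtain ⟨n, hn, m, m', hup, hdown⟩ := h
  lift n to ℕ using hn.le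
  have hn0 : n ≠ 0 := by omega
  have hsplit : A = A ∩ Ici m ∪ A ∩ Iic m' ∪ A ∩ Ioo m' m := by
    rw [← inter_union_distrib_left, ← inter_union_distrib_left, eq_comm, inter_eq_left]
    intro x _
    simp only [mem_union, mem_Ici, mem_Iic, mem_Ioo]
    omega
  rw [hsplit]
  refine ((definable₁_inter_of_modEq (definable₁_Ici m) hn0 ?_).union
    (definable₁_inter_of_modEq (definable₁_Iic m') hn0 ?_)).union
    (((finite_Ioo m' m).inter_of_right A).definable₁ (subset_univ _))
  · exact fun x hx y hy => mem_iff_mem_of_modEq_of_mem_Ici hup hx hy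
  · exact fun x hx y hy => mem_iff_mem_of_modEq_of_mem_Iic hdown hx hy
end

section
/- Every subset of ℤ definable with parameters in the structure (ℤ,<,+), viewed as a structure in the language of ordered abelian groups, is eventually periodic. -/
open FirstOrder

/-!
Formulas of `(ℤ, <, +)` with parameters define Presburger sets: Boolean combinations of
halfspaces `{φ ≤ 0}` and congruence sets `{d ∣ φ}`, `φ` affine. The only nontrivial step is
closure under `∃`, i.e. under saturation along a direction `δ` (Cooper's quantifier elimination).
Membership in a Presburger set `X` is invariant under translation by any multiple of some `D • δ`
that crosses none of finitely many walls `{φ = 0}`. Hence if the line `v + ℤ • δ` meets `X`, it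
does so either at some `v + r • δ` with `0 ≤ r < D`, or at a point where some wall function `φ`
takes a value `s` with `|s| ≤ |φ.linear δ| * D`. Both conditions are Presburger in `v`: in the
second, the point is `(s - φ v) / φ.linear δ`, and clearing this denominator turns atoms into
atoms. Far out along a line no wall is crossed any more, so every line meets a Presburger set in
an eventually periodic set.
-/

open Filter FirstOrder.Language

variable {α β : Type*}

theorem AffineMap.apply_add_smul (φ : (α → ℤ) →ᵃ[ℤ] ℤ) (v δ : α → ℤ) (w : ℤ) :
    φ (v + w • δ) = φ v + w * φ.linear δ := by
  rw [add_comm v, ← vadd_eq_add, φ.map_vadd, map_zsmul, vadd_eq_add, smul_eq_mul, add_comm]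

theorem AffineMap.linear_mul_apply_add_smul (φ ψ : (α → ℤ) →ᵃ[ℤ] ℤ) (v δ : α → ℤ) (w : ℤ) :
    φ.linear δ * ψ (v + w • δ) = φ.linear δ * ψ v + ψ.linear δ * (φ (v + w • δ) - φ v) := by
  rw [φ.apply_add_smul, ψ.apply_add_smul]
  ring

inductive IsPresburger : Set (α → ℤ) → Prop
  | nonpos (φ : (α → ℤ) →ᵃ[ℤ] ℤ) : IsPresburger {v | φ v ≤ 0}
  | dvd {d : ℤ} (hd : d ≠ 0) (φ : (α → ℤ) →ᵃ[ℤ] ℤ) : IsPresburger {v | d ∣ φ v}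
  | compl {X : Set (α → ℤ)} : IsPresburger X → IsPresburger Xᶜ
  | union {X Y : Set (α → ℤ)} : IsPresburger X → IsPresburger Y → IsPresburger (X ∪ Y)

namespace IsPresburger

variable {X Y : Set (α → ℤ)}

theorem univ : IsPresburger (Set.univ : Set (α → ℤ)) := by
  simpa using nonpos (AffineMap.const ℤ (α → ℤ) (0 : ℤ))

theorem empty : IsPresburger (∅ : Set (α → ℤ)) := by
  simpa using (univ (α := α)).compl

theorem inter (hX : IsPresburger X) (hY : IsPresburger Y) : IsPresburger (X ∩ Y) := by
  simpa [Set.compl_union] using (hX.compl.union hY.compl).compl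

theorem diff (hX : IsPresburger X) (hY : IsPresburger Y) : IsPresburger (X \ Y) :=
  hX.inter hY.compl

theorem biUnion {ι : Type*} (s : Finset ι) {X : ι → Set (α → ℤ)}
    (h : ∀ i ∈ s, IsPresburger (X i)) : IsPresburger (⋃ i ∈ s, X i) := by
  rw [← Finset.sup_set_eq_biUnion]
  exact Finset.sup_induction empty (fun _ h₁ _ h₂ => h₁.union h₂) h

theorem setOf_le (φ ψ : (α → ℤ) →ᵃ[ℤ] ℤ) : IsPresburger {v | φ v ≤ ψ v} := by
  simpa [sub_nonpos] using nonpos (φ - ψ)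

theorem setOf_lt (φ ψ : (α → ℤ) →ᵃ[ℤ] ℤ) : IsPresburger {v | φ v < ψ v} := by
  convert (setOf_le ψ φ).compl using 1
  ext v
  simp

theorem setOf_eq (φ ψ : (α → ℤ) →ᵃ[ℤ] ℤ) : IsPresburger {v | φ v = ψ v} := by
  convert (setOf_le φ ψ).inter (setOf_le ψ φ) using 1
  ext v
  simp [le_antisymm_iff]

theorem preimage (hX : IsPresburger X) (f : (β → ℤ) →ᵃ[ℤ] (α → ℤ)) :
    IsPresburger (f ⁻¹' X) := by
  induction hX with
  | nonpos φ => exact nonpos (φ.comp f)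
  | dvd hd φ => exact dvd hd (φ.comp f)
  | compl _ ih => exact ih.compl
  | union _ _ ih₁ ih₂ => exact ih₁.union ih₂

variable {φ : (α → ℤ) →ᵃ[ℤ] ℤ} {δ : α → ℤ}

theorem setOf_exists_apply_eq (hφ : φ.linear δ ≠ 0) (s : ℤ) :
    IsPresburger {v | ∃ w : ℤ, φ (v + w • δ) = s} := by
  convert dvd hφ (AffineMap.const ℤ (α → ℤ) s - φ) using 1
  ext v
  simp only [φ.apply_add_smul, AffineMap.coe_sub, AffineMap.coe_const, Pi.sub_apply,
    Function.const_apply, Set.mem_ofPred_eq, Dvd.dvd]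
  exact exists_congr fun w => by constructor <;> intro h <;> linarith

theorem setOf_exists_apply_eq_and_mem (hX : IsPresburger X) (hφ : φ.linear δ ≠ 0) (s : ℤ) :
    IsPresburger {v | ∃ w : ℤ, φ (v + w • δ) = s ∧ v + w • δ ∈ X} := by
  set e := φ.linear δ
  have hG := setOf_exists_apply_eq hφ s
  -- `χ ψ v` is `e * ψ` at the point of the line through `v` where `φ = s`.
  set χ : ((α → ℤ) →ᵃ[ℤ] ℤ) → ((α → ℤ) →ᵃ[ℤ] ℤ) :=
    fun ψ => e • ψ + ψ.linear δ • (AffineMap.const ℤ (α → ℤ) s - φ)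
  have atom : ∀ (P : ℤ → Prop) ψ v, (∃ w : ℤ, φ (v + w • δ) = s ∧ P (e * ψ (v + w • δ))) ↔
      (∃ w : ℤ, φ (v + w • δ) = s) ∧ P (χ ψ v) := by
    intro P ψ v
    have key : ∀ w : ℤ, φ (v + w • δ) = s → e * ψ (v + w • δ) = χ ψ v := by
      intro w hw
      rw [φ.linear_mul_apply_add_smul, hw]
      simp [χ, e]
    constructor
    · rintro ⟨w, hw, hP⟩
      exact ⟨⟨w, hw⟩, key w hw ▸ hP⟩
    · rintro ⟨⟨w, hw⟩, hP⟩
      exact ⟨w, hw, (key w hw).symm ▸ hP⟩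
  induction hX with
  | nonpos ψ =>
    convert hG.inter (nonpos (e • χ ψ)) using 1
    ext v
    simp only [Set.mem_inter_iff, Set.mem_ofPred_eq, AffineMap.coe_smul, Pi.smul_apply,
      smul_eq_mul]
    rw [← atom (fun x => e * x ≤ 0)]
    refine exists_congr fun w => and_congr_right fun _ => ?_
    have := mul_self_pos.2 hφ
    constructor <;> intro h <;> nlinarith
  | @dvd d hd ψ =>
    convert hG.inter (dvd (mul_ne_zero hφ hd) (χ ψ)) using 1
    ext v
    simp only [Set.mem_inter_iff, Set.mem_ofPred_eq]
    rw [← atom (fun x => e * d ∣ x)]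
    exact exists_congr fun w => and_congr_right fun _ => (mul_dvd_mul_iff_left hφ).symm
  | compl _ ih =>
    convert hG.diff ih using 1
    ext v
    constructor
    · rintro ⟨w, hw, hX⟩
      refine ⟨⟨w, hw⟩, fun ⟨w', hw', hX'⟩ => hX ?_⟩
      obtain rfl : w' = w := by
        rw [φ.apply_add_smul, ← hw, φ.apply_add_smul] at hw'
        exact mul_right_cancel₀ hφ (add_left_cancel hw')
      exact hX'
    · rintro ⟨⟨w, hw⟩, hX⟩
      exact ⟨w, hw, fun hX' => hX ⟨w, hw, hX'⟩⟩
  | union _ _ ih₁ ih₂ =>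
    convert ih₁.union ih₂ using 1
    ext v
    simp only [Set.mem_union, Set.mem_ofPred_eq, and_or_left, exists_or]

end IsPresburger

def PeriodicOffWalls (δ : α → ℤ) (D : ℤ) (H : Finset ((α → ℤ) →ᵃ[ℤ] ℤ)) (X : Set (α → ℤ)) :
    Prop :=
  ∀ v (k : ℤ), D ∣ k → (∀ φ ∈ H, φ v ≤ 0 ↔ φ (v + k • δ) ≤ 0) → (v ∈ X ↔ v + k • δ ∈ X)

theorem IsPresburger.exists_periodicOffWalls {X : Set (α → ℤ)} (hX : IsPresburger X)
    (δ : α → ℤ) : ∃ D > 0, ∃ H, PeriodicOffWalls δ D H X := by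
  classical
  induction hX with
  | nonpos φ => exact ⟨1, one_pos, {φ}, fun v k _ hH => hH φ (Finset.mem_singleton_self φ)⟩
  | @dvd d hd φ =>
    refine ⟨|d|, abs_pos.2 hd, ∅, fun v k hk _ => ?_⟩
    change d ∣ φ v ↔ d ∣ φ (v + k • δ)
    rw [φ.apply_add_smul]
    exact (dvd_add_left (((abs_dvd d k).1 hk).mul_right _)).symm
  | compl _ ih =>
    obtain ⟨D, hD, H, h⟩ := ih
    exact ⟨D, hD, H, fun v k hk hH => not_congr (h v k hk hH)⟩
  | union _ _ ih₁ ih₂ =>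
    obtain ⟨D₁, hD₁, H₁, h₁⟩ := ih₁
    obtain ⟨D₂, hD₂, H₂, h₂⟩ := ih₂
    refine ⟨D₁ * D₂, mul_pos hD₁ hD₂, H₁ ∪ H₂, fun v k hk hH => or_congr ?_ ?_⟩
    · exact h₁ v k ((dvd_mul_right _ _).trans hk) fun φ hφ => hH φ (Finset.mem_union_left _ hφ)
    · exact h₂ v k ((dvd_mul_left _ _).trans hk) fun φ hφ => hH φ (Finset.mem_union_right _ hφ)

theorem abs_le_abs_sub_of_not_nonpos_iff {a b : ℤ} (h : ¬(a ≤ 0 ↔ b ≤ 0)) :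
    |a| ≤ |b - a| ∧ |b| ≤ |b - a| := by
  rcases abs_cases a with ⟨ha, _⟩ | ⟨ha, _⟩ <;> rcases abs_cases b with ⟨hb, _⟩ | ⟨hb, _⟩ <;>
    rcases abs_cases (b - a) with ⟨hba, _⟩ | ⟨hba, _⟩ <;> rw [ha, hb, hba] <;> omega

theorem eventually_atTop_add_mul_nonpos_iff (c E k : ℤ) :
    ∀ᶠ z in atTop, c + z * E ≤ 0 ↔ c + (z + k) * E ≤ 0 := by
  refine eventually_atTop.2 ⟨|c| + |k| + 1, fun z hz => ?_⟩
  obtain ⟨hc₁, hc₂⟩ := abs_le.1 (le_refl |c|)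
  obtain ⟨hk₁, hk₂⟩ := abs_le.1 (le_refl |k|)
  rcases lt_trichotomy E 0 with hE | rfl | hE
  · have h₁ : z * E ≤ -z := by nlinarith
    have h₂ : (z + k) * E ≤ -(z + k) := by nlinarith
    constructor <;> intro <;> linarith
  · simp
  · have h₁ : z ≤ z * E := by nlinarith
    have h₂ : z + k ≤ (z + k) * E := by nlinarith
    constructor <;> intro <;> linarith

theorem eventually_atBot_add_mul_nonpos_iff (c E k : ℤ) :
    ∀ᶠ z in atBot, c + z * E ≤ 0 ↔ c + (z + k) * E ≤ 0 := by
  filter_upwards [tendsto_neg_atBot_atTop.eventually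
    (eventually_atTop_add_mul_nonpos_iff c (-E) (-k))] with z hz
  rwa [neg_mul_neg, ← neg_add, neg_mul_neg] at hz

namespace PeriodicOffWalls

variable {δ : α → ℤ} {D : ℤ} {H : Finset ((α → ℤ) →ᵃ[ℤ] ℤ)} {X : Set (α → ℤ)}

theorem exists_add_smul_mem_iff (h : PeriodicOffWalls δ D H X) (hD : 0 < D) (v : α → ℤ) :
    (∃ z : ℤ, v + z • δ ∈ X) ↔ (∃ r ∈ Finset.Ico 0 D, v + r • δ ∈ X) ∨
      ∃ φ ∈ H.filter (·.linear δ ≠ 0), ∃ s ∈ Finset.Icc (-(|φ.linear δ| * D)) (|φ.linear δ| * D),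
        ∃ w : ℤ, φ (v + w • δ) = s ∧ v + w • δ ∈ X := by
  refine ⟨fun ⟨z, hz⟩ => ?_, ?_⟩
  · by_cases hper : ∀ y : ℤ, v + (y + D) • δ ∈ X ↔ v + y • δ ∈ X
    · have hP : Function.Periodic (fun y : ℤ => v + y • δ ∈ X) D := fun y => propext (hper y)
      refine .inl ⟨z % D, Finset.mem_Ico.2 ⟨Int.emod_nonneg z hD.ne', Int.emod_lt_of_pos z hD⟩, ?_⟩
      have := hP.sub_int_mul_eq (x := z) (z / D)
      rw [Int.cast_id, mul_comm, ← Int.emod_def] at this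
      rwa [this]
    · obtain ⟨y, hy⟩ := not_forall.1 hper
      have hwall : ¬∀ φ ∈ H, φ (v + y • δ) ≤ 0 ↔ φ (v + (y + D) • δ) ≤ 0 := fun hH => hy <| by
        rw [add_smul, ← add_assoc] at hH ⊢
        exact (h _ D dvd_rfl hH).symm
      obtain ⟨φ, hφH, hφ⟩ := by simpa only [not_forall, exists_prop] using hwall
      have hba : φ (v + (y + D) • δ) - φ (v + y • δ) = D * φ.linear δ := by
        rw [φ.apply_add_smul, φ.apply_add_smul]
        ring
      have hE : φ.linear δ ≠ 0 := fun hE => hφ <| by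
        rw [sub_eq_iff_eq_add, hE, mul_zero, zero_add] at hba
        rw [hba]
      obtain ⟨ha, hb⟩ := abs_le_abs_sub_of_not_nonpos_iff hφ
      rw [hba, abs_mul, abs_of_pos hD, mul_comm] at ha hb
      refine .inr ⟨φ, Finset.mem_filter.2 ⟨hφH, hE⟩, ?_⟩
      by_cases hyX : v + y • δ ∈ X
      · exact ⟨_, Finset.mem_Icc.2 (abs_le.1 ha), y, rfl, hyX⟩
      · exact ⟨_, Finset.mem_Icc.2 (abs_le.1 hb), y + D, rfl, by tauto⟩
  · rintro (⟨r, -, hr⟩ | ⟨φ, -, s, -, w, -, hw⟩)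
    exacts [⟨r, hr⟩, ⟨w, hw⟩]

theorem eventually_iff {l : Filter ℤ} (h : PeriodicOffWalls δ D H X) (v : α → ℤ) {k : ℤ}
    (hk : D ∣ k) (hl : ∀ c E : ℤ, ∀ᶠ z in l, c + z * E ≤ 0 ↔ c + (z + k) * E ≤ 0) :
    ∀ᶠ z in l, v + z • δ ∈ X ↔ v + (z + k) • δ ∈ X := by
  filter_upwards [(eventually_all_finset H).2 fun φ _ => hl (φ v) (φ.linear δ)] with z hz
  rw [add_smul, ← add_assoc]
  refine h _ k hk fun φ hφ => ?_
  simp only [φ.apply_add_smul]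
  rw [add_assoc, ← add_mul]
  exact hz φ hφ

theorem evPeriodic (h : PeriodicOffWalls δ D H X) (hD : 0 < D) (v : α → ℤ) :
    EvPeriodic {z : ℤ | v + z • δ ∈ X} := by
  obtain ⟨m, hm⟩ := eventually_atTop.1 <|
    h.eventually_iff v dvd_rfl (eventually_atTop_add_mul_nonpos_iff · · D)
  obtain ⟨m', hm'⟩ := eventually_atBot.1 <|
    h.eventually_iff v (dvd_neg.2 dvd_rfl) (eventually_atBot_add_mul_nonpos_iff · · (-D))
  exact ⟨D, hD, m, m', hm, fun z hz => by simpa [sub_eq_add_neg] using hm' z hz⟩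

end PeriodicOffWalls

namespace IsPresburger

variable {X : Set (α → ℤ)}

theorem setOf_exists_add_smul_mem (hX : IsPresburger X) (δ : α → ℤ) :
    IsPresburger {v | ∃ z : ℤ, v + z • δ ∈ X} := by
  obtain ⟨D, hD, H, h⟩ := hX.exists_periodicOffWalls δ
  have : {v | ∃ z : ℤ, v + z • δ ∈ X} = (⋃ r ∈ Finset.Ico 0 D, {v | v + r • δ ∈ X}) ∪
      ⋃ φ ∈ H.filter (·.linear δ ≠ 0), ⋃ s ∈ Finset.Icc (-(|φ.linear δ| * D)) (|φ.linear δ| * D),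
        {v | ∃ w : ℤ, φ (v + w • δ) = s ∧ v + w • δ ∈ X} := by
    ext v
    rw [Set.mem_ofPred_eq, h.exists_add_smul_mem_iff hD v]
    simp only [Set.mem_union, Set.mem_iUnion, Set.mem_ofPred_eq, exists_prop]
  rw [this]
  refine (biUnion _ fun r _ => ?_).union (biUnion _ fun φ hφ => biUnion _ fun s _ => ?_)
  · exact hX.preimage (AffineMap.id ℤ (α → ℤ) + AffineMap.const ℤ (α → ℤ) (r • δ))
  · exact hX.setOf_exists_apply_eq_and_mem (Finset.mem_filter.1 hφ).2 s

theorem evPeriodic (hX : IsPresburger X) (v δ : α → ℤ) :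
    EvPeriodic {z : ℤ | v + z • δ ∈ X} := by
  obtain ⟨D, hD, H, h⟩ := hX.exists_periodicOffWalls δ
  exact h.evPeriodic hD v

end IsPresburger

theorem exists_affineMap_realize {S : Set ℤ} {γ : Type*} (t : Log[[S]].Term γ) :
    ∃ φ : (γ → ℤ) →ᵃ[ℤ] ℤ, ∀ p, t.realize p = φ p := by
  induction t with
  | var i => exact ⟨(LinearMap.proj i).toAffineMap, fun p => rfl⟩
  | @func l f ts ih =>
    choose φ hφ using ih
    rcases f with f | f
    · cases f with
      | zero => exact ⟨0, fun p => rfl⟩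
      | neg => exact ⟨-φ 0, fun p => by rw [AffineMap.coe_neg, Pi.neg_apply, ← hφ]; rfl⟩
      | add => exact ⟨φ 0 + φ 1, fun p => by rw [AffineMap.coe_add, Pi.add_apply, ← hφ, ← hφ]; rfl⟩
    · cases l with
      | zero => exact ⟨AffineMap.const ℤ (γ → ℤ) (f : ℤ), fun p => rfl⟩
      | succ l => exact isEmptyElim f

def sumElimSnocZero (α : Type*) (n : ℕ) : (α ⊕ Fin n → ℤ) →ₗ[ℤ] (α ⊕ Fin (n + 1) → ℤ) where
  toFun p := Sum.elim (p ∘ Sum.inl) (Fin.snoc (p ∘ Sum.inr) 0)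
  map_add' p q := by
    ext (a | j)
    · rfl
    · refine Fin.lastCases ?_ (fun i => ?_) j <;> simp
  map_smul' c p := by
    ext (a | j)
    · rfl
    · refine Fin.lastCases ?_ (fun i => ?_) j <;> simp

theorem sumElimSnocZero_add_smul {n : ℕ} (p : α ⊕ Fin n → ℤ) (z : ℤ) :
    sumElimSnocZero α n p + z • Sum.elim (0 : α → ℤ) (Pi.single (Fin.last n) 1) =
      Sum.elim (p ∘ Sum.inl) (Fin.snoc (p ∘ Sum.inr) z) := by
  ext (a | j)
  · simp [sumElimSnocZero]
  · refine Fin.lastCases ?_ (fun i => ?_) j <;> simp [sumElimSnocZero]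

theorem isPresburger_setOf_realize {S : Set ℤ} {n : ℕ} (φ : Log[[S]].BoundedFormula α n) :
    IsPresburger {p : α ⊕ Fin n → ℤ | φ.Realize (p ∘ Sum.inl) (p ∘ Sum.inr)} := by
  induction φ with
  | falsum => exact IsPresburger.empty
  | equal t₁ t₂ =>
    obtain ⟨φ₁, h₁⟩ := exists_affineMap_realize t₁
    obtain ⟨φ₂, h₂⟩ := exists_affineMap_realize t₂
    simpa [BoundedFormula.Realize, h₁, h₂] using IsPresburger.setOf_eq φ₁ φ₂
  | rel R ts =>
    rcases R with R | R
    · cases R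
      obtain ⟨φ₁, h₁⟩ := exists_affineMap_realize (ts 0)
      obtain ⟨φ₂, h₂⟩ := exists_affineMap_realize (ts 1)
      convert IsPresburger.setOf_lt φ₁ φ₂ using 1
      ext p
      simp only [Set.mem_ofPred_eq, BoundedFormula.Realize, Sum.elim_comp_inl_inr, ← h₁, ← h₂]
      rfl
    · exact isEmptyElim R
  | imp _ _ ih₁ ih₂ =>
    convert ih₁.compl.union ih₂ using 1
    ext p
    simp [imp_iff_not_or]
  | @all k _ ih =>
    have hδ := ih.compl.setOf_exists_add_smul_mem (Sum.elim 0 (Pi.single (Fin.last k) 1))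
    convert hδ.compl.preimage (sumElimSnocZero α k).toAffineMap using 1
    ext p
    simp only [Set.mem_preimage, Set.mem_compl_iff, Set.mem_ofPred_eq, LinearMap.coe_toAffineMap,
      sumElimSnocZero_add_smul, Sum.elim_comp_inl, Sum.elim_comp_inr, not_exists, not_not,
      BoundedFormula.realize_all]

/-- Every subset of `ℤ` definable with parameters in `(ℤ,<,+)` is eventually periodic. -/
theorem stmt_14 (A : Set ℤ) (h : Set.Definable₁ (Set.univ : Set ℤ) Log A) :
    EvPeriodic A := by
  obtain ⟨φ, hφ⟩ := h
  convert (isPresburger_setOf_realize φ).evPeriodic 0 1 using 1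
  ext z
  have hz : z ∈ A ↔ φ.Realize fun _ => z := Set.ext_iff.1 hφ fun _ => z
  rw [hz, Set.mem_ofPred_eq, Set.mem_ofPred_eq, Formula.Realize]
  congr!
  simp
end
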